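/- (Strict NEs are strict local maxima of the potential) In a Markov potential game satisfying d_θ(s) > 0 for all θ, s, a policy θ* is a strict Nash equilibrium if and only if it is a strict local maximum of the total potential function Φ on the feasible set X; i.e., there exists δ > 0 such that Φ(θ) < Φ(θ*) for every θ ∈ X with θ ≠ θ* and ‖θ − θ*‖ ≤ δ. -/

import Mathlib

open Finset

namespace MAMDP

variable {n : ℕ} {S : Type} [Fintype S] [DecidableEq S]
  {A : Fin n → Type} [∀ i, Fintype (A i)] [∀ i, DecidableEq (A i)]

/-- Joint product policy probability. -/
def jointPi (θ : ∀ i, S → A i → ℝ) (s : S) (a : ∀ i, A i) : ℝ :=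
  ∏ i, θ i s (a i)

/-- One-step evolution of a state distribution under the joint policy. -/
def stepDist (P : S → (∀ i, A i) → S → ℝ) (θ : ∀ i, S → A i → ℝ) (μ : S → ℝ) : S → ℝ :=
  fun s' => ∑ s, ∑ a, μ s * jointPi θ s a * P s a s'

/-- State distribution after `t` steps, starting from `μ`. -/
def visit (P : S → (∀ i, A i) → S → ℝ) (θ : ∀ i, S → A i → ℝ) (t : ℕ) (μ : S → ℝ) : S → ℝ :=
  (stepDist P θ)^[t] μ

/-- Point mass at `s0`. -/
def deltaDist (s0 : S) : S → ℝ := fun s => if s = s0 then 1 else 0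

/-- Discounted state visitation distribution `d_θ` for initial distribution `ρ`. -/
noncomputable def dvisit (P : S → (∀ i, A i) → S → ℝ) (θ : ∀ i, S → A i → ℝ) (γ : ℝ)
    (ρ : S → ℝ) (s : S) : ℝ :=
  (1 - γ) * ∑' t : ℕ, γ ^ t * visit P θ t ρ s

/-- Expected one-step reward at state `s` under the joint policy. -/
def expRew (rw : S → (∀ i, A i) → ℝ) (θ : ∀ i, S → A i → ℝ) (s : S) : ℝ :=
  ∑ a, jointPi θ s a * rw s a

/-- Value function: expected discounted sum of rewards starting from state `s`. -/
noncomputable def Vval (P : S → (∀ i, A i) → S → ℝ) (θ : ∀ i, S → A i → ℝ) (γ : ℝ)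
    (rw : S → (∀ i, A i) → ℝ) (s : S) : ℝ :=
  ∑' t : ℕ, γ ^ t * ∑ s', visit P θ t (deltaDist s) s' * expRew rw θ s'

/-- Q-function. -/
noncomputable def Qval (P : S → (∀ i, A i) → S → ℝ) (θ : ∀ i, S → A i → ℝ) (γ : ℝ)
    (rw : S → (∀ i, A i) → ℝ) (s : S) (a : ∀ i, A i) : ℝ :=
  rw s a + γ * ∑ s', P s a s' * Vval P θ γ rw s'

/-- Total discounted reward `J` under initial distribution `ρ`. -/
noncomputable def Jval (P : S → (∀ i, A i) → S → ℝ) (θ : ∀ i, S → A i → ℝ) (γ : ℝ)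
    (rw : S → (∀ i, A i) → ℝ) (ρ : S → ℝ) : ℝ :=
  ∑ s, ρ s * Vval P θ γ rw s

/-- Averaged Q-function of agent `i`: average of `Q(s, a)` with `a i = ai` fixed,
weighted by the other agents' policies. -/
noncomputable def Qbar (P : S → (∀ i, A i) → S → ℝ) (θ : ∀ i, S → A i → ℝ) (γ : ℝ)
    (rw : S → (∀ i, A i) → ℝ) (i : Fin n) (s : S) (ai : A i) : ℝ :=
  ∑ a : ∀ j, A j, if a i = ai then
    (∏ j ∈ Finset.univ.erase i, θ j s (a j)) * Qval P θ γ rw s a else 0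

/-- Averaged advantage function of agent `i`. -/
noncomputable def Abar (P : S → (∀ i, A i) → S → ℝ) (θ : ∀ i, S → A i → ℝ) (γ : ℝ)
    (rw : S → (∀ i, A i) → ℝ) (i : Fin n) (s : S) (ai : A i) : ℝ :=
  Qbar P θ γ rw i s ai - Vval P θ γ rw s

/-- Entries of the policy gradient `∇_{θ_i} J_i(θ)`:
`(1/(1-γ)) d_θ(s) Q̄_i^θ(s, a_i)`. -/
noncomputable def gradJ (P : S → (∀ i, A i) → S → ℝ) (θ : ∀ i, S → A i → ℝ) (γ : ℝ)
    (rw : S → (∀ i, A i) → ℝ) (ρ : S → ℝ) (i : Fin n) (s : S) (ai : A i) : ℝ :=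
  (1 / (1 - γ)) * dvisit P θ γ ρ s * Qbar P θ γ rw i s ai

/-- Feasibility of agent `i`'s parameters: a point of `Δ(A_i)^{|S|}`. -/
def feasibleAgent (i : Fin n) (θi : S → A i → ℝ) : Prop :=
  ∀ s, (∀ a, 0 ≤ θi s a) ∧ ∑ a, θi s a = 1

/-- Feasibility of a joint parameter `θ ∈ X = ∏_i Δ(A_i)^{|S|}`. -/
def feasible (θ : ∀ i, S → A i → ℝ) : Prop := ∀ i, feasibleAgent i (θ i)

/-- `P` is a transition kernel. -/
def stochMat (P : S → (∀ i, A i) → S → ℝ) : Prop :=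
  ∀ s a, (∀ s', 0 ≤ P s a s') ∧ ∑ s', P s a s' = 1

/-- `ρ` is a probability distribution on states. -/
def initDist (ρ : S → ℝ) : Prop := (∀ s, 0 ≤ ρ s) ∧ ∑ s, ρ s = 1

/-- Nash equilibrium. -/
def isNE (P : S → (∀ i, A i) → S → ℝ) (γ : ℝ) (r : Fin n → S → (∀ i, A i) → ℝ)
    (ρ : S → ℝ) (θ : ∀ i, S → A i → ℝ) : Prop :=
  feasible θ ∧ ∀ (i : Fin n) (θi' : S → A i → ℝ), feasibleAgent i θi' →
    Jval P (Function.update θ i θi') γ (r i) ρ ≤ Jval P θ γ (r i) ρ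

/-- Strict Nash equilibrium. -/
def strictNE (P : S → (∀ i, A i) → S → ℝ) (γ : ℝ) (r : Fin n → S → (∀ i, A i) → ℝ)
    (ρ : S → ℝ) (θ : ∀ i, S → A i → ℝ) : Prop :=
  feasible θ ∧ ∀ (i : Fin n) (θi' : S → A i → ℝ), feasibleAgent i θi' → θi' ≠ θ i →
    Jval P (Function.update θ i θi') γ (r i) ρ < Jval P θ γ (r i) ρ

/-- Markov potential game with potential `φ`. -/
def isPotential (P : S → (∀ i, A i) → S → ℝ) (γ : ℝ) (r : Fin n → S → (∀ i, A i) → ℝ)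
    (φ : S → (∀ i, A i) → ℝ) : Prop :=
  ∀ (θ : ∀ i, S → A i → ℝ), feasible θ → ∀ (i : Fin n) (θi' : S → A i → ℝ),
    feasibleAgent i θi' → ∀ s,
    Vval P (Function.update θ i θi') γ (r i) s - Vval P θ γ (r i) s
      = Vval P (Function.update θ i θi') γ φ s - Vval P θ γ φ s

/-- Squared Euclidean distance between two joint parameters. -/
def polNormSq (x y : ∀ i, S → A i → ℝ) : ℝ :=
  ∑ i, ∑ s, ∑ a, (x i s a - y i s a) ^ 2

/-- The deterministic (pure) joint policy picking `astar i s`. -/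
def purePol (astar : ∀ i : Fin n, S → A i) : ∀ i, S → A i → ℝ :=
  fun i s a => if a = astar i s then 1 else 0

end MAMDP

open MAMDP

/-!
Both sides are equivalent to `θ*` being strictly greedy: at every state `s`, each agent's policy
`θ*_i(s)` is the unique maximizer over the simplex of `w ↦ ∑ₐ w(a) Ā_i(s, a)` (for the potential
`φ`). By the performance difference lemma, letting agent `i` alone switch to `w` at the single
state `s` changes `Φ` (and, by the potential property, `J_i`) by `(1 - γ)⁻¹ d(s) ∑ₐ w(a) Ā_i(s, a)`
with `d(s) > 0`. This gives the equivalence with strict Nash equilibria, and, applied to a small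
step from `θ*_i(s)` towards `w`, shows that strict local maxima are strictly greedy.

Conversely, a strictly greedy `θ*` is pure with `Ā_i(s, a) ≤ -Δ < 0` off its actions. For a
feasible `θ` near `θ*`, let `m(s)` be the expected number of agents whose action at `s` deviates
from `θ*`. Expanding the product policy around the pure profile, single deviations lower the
advantage by at least `Δ (1 - m) m` while multiple deviations have mass at most `m²`, so
`Φ(θ) - Φ(θ*) = (1 - γ)⁻¹ ∑ₛ d_θ(s) E_{a ∼ θ(s)} A_{θ*}(s, a) < 0` once `m` is small and `θ ≠ θ*`.
-/

namespace MAMDP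

open Matrix Filter Topology

lemma one_sub_sum_le_prod {ι : Type*} [DecidableEq ι] {T : Finset ι} {q : ι → ℝ}
    (h0 : ∀ j ∈ T, 0 ≤ q j) (h1 : ∀ j ∈ T, q j ≤ 1) :
    1 - ∑ j ∈ T, (1 - q j) ≤ ∏ j ∈ T, q j := by
  induction T using Finset.induction_on with
  | empty => simp
  | insert a T ha ih =>
    rw [Finset.prod_insert ha, Finset.sum_insert ha]
    have hT := ih (fun j hj => h0 j (mem_insert_of_mem hj))
      (fun j hj => h1 j (mem_insert_of_mem hj))
    have hS : 0 ≤ ∑ j ∈ T, (1 - q j) :=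
      Finset.sum_nonneg fun j hj => by linarith [h1 j (mem_insert_of_mem hj)]
    nlinarith [h0 a (mem_insert_self a T), h1 a (mem_insert_self a T)]

lemma exists_pos_forall_le_neg {ι : Type*} [Finite ι] (f : ι → ℝ) (p : ι → Prop)
    (h : ∀ k, p k → f k < 0) : ∃ Δ > 0, ∀ k, p k → f k ≤ -Δ := by
  have hev : ∀ᶠ Δ in 𝓝[>] (0 : ℝ), ∀ k, p k → f k ≤ -Δ := by
    refine eventually_all.2 fun k => ?_
    by_cases hk : p k
    · filter_upwards [nhdsWithin_le_nhds (eventually_lt_nhds (neg_pos.2 (h k hk)))] with Δ hΔ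
      exact fun _ => by linarith
    · exact Eventually.of_forall fun _ hk' => (hk hk').elim
  obtain ⟨Δ, hΔ, hΔ0⟩ := (hev.and self_mem_nhdsWithin).exists
  exact ⟨Δ, hΔ0, hΔ⟩

lemma apply_lt_one_of_ne_single {α : Type*} [Fintype α] [DecidableEq α] {w : α → ℝ}
    (hw : w ∈ stdSimplex ℝ α) {x : α} (hne : w ≠ Pi.single x 1) : w x < 1 := by
  refine lt_of_le_of_ne (mem_Icc_of_mem_stdSimplex hw x).2 fun h => hne (funext fun a => ?_)
  have hrest : ∑ b ∈ univ.erase x, w b = 0 := by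
    rw [Finset.sum_erase_eq_sub (mem_univ x), hw.2, h, sub_self]
  rcases eq_or_ne a x with rfl | ha
  · rw [h, Pi.single_eq_same]
  · rw [Pi.single_eq_of_ne ha]
    exact (Finset.sum_eq_zero_iff_of_nonneg fun b _ => hw.1 b).1 hrest a
      (mem_erase.2 ⟨ha, mem_univ a⟩)

lemma inv_one_sub_mul_sum_mul_neg {S : Type*} [Fintype S] {γ : ℝ} (hγ1 : γ < 1) {d g : S → ℝ}
    (hd : ∀ s, 0 < d s) (hg : ∀ s, g s ≤ 0) (hneg : ∃ s, g s < 0) :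
    (1 - γ)⁻¹ * ∑ s, d s * g s < 0 := by
  obtain ⟨s, hs⟩ := hneg
  exact mul_neg_of_pos_of_neg (inv_pos.2 (sub_pos.2 hγ1)) (Finset.sum_neg'
    (fun s _ => mul_nonpos_of_nonneg_of_nonpos (hd s).le (hg s))
    ⟨s, mem_univ s, mul_neg_of_pos_of_neg (hd s) hs⟩)

section Discounted

variable {S : Type*} [Fintype S] [DecidableEq S] {Q : Matrix S S ℝ} {γ : ℝ}

lemma norm_mulVec_le_of_mem_rowStochastic (hQ : Q ∈ rowStochastic ℝ S) (c : S → ℝ) :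
    ‖Q *ᵥ c‖ ≤ ‖c‖ := by
  refine (pi_norm_le_iff_of_nonneg (norm_nonneg c)).2 fun s => ?_
  calc ‖(Q *ᵥ c) s‖ ≤ ∑ s', ‖Q s s' * c s'‖ := norm_sum_le _ _
    _ ≤ ∑ s', Q s s' * ‖c‖ := by
      gcongr with s'
      rw [norm_mul, Real.norm_of_nonneg (nonneg_of_mem_rowStochastic hQ)]
      exact mul_le_mul_of_nonneg_left (norm_le_pi_norm c s') (nonneg_of_mem_rowStochastic hQ)
    _ = ‖c‖ := by rw [← Finset.sum_mul, sum_row_of_mem_rowStochastic hQ, one_mul]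

noncomputable def discounted (Q : Matrix S S ℝ) (γ : ℝ) (c : S → ℝ) (s : S) : ℝ :=
  ∑' t : ℕ, γ ^ t * (Q ^ t *ᵥ c) s

lemma summable_discounted_term (hQ : Q ∈ rowStochastic ℝ S) (hγ0 : 0 ≤ γ) (hγ1 : γ < 1)
    (c : S → ℝ) (s : S) : Summable fun t : ℕ => γ ^ t * (Q ^ t *ᵥ c) s := by
  refine Summable.of_norm_bounded ((summable_geometric_of_lt_one hγ0 hγ1).mul_right ‖c‖)
    fun t => ?_
  rw [norm_mul, norm_pow, Real.norm_of_nonneg hγ0]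
  gcongr
  exact (norm_le_pi_norm _ s).trans
    (norm_mulVec_le_of_mem_rowStochastic (pow_mem hQ t) c)

lemma discounted_eq_add (hQ : Q ∈ rowStochastic ℝ S) (hγ0 : 0 ≤ γ) (hγ1 : γ < 1)
    (c : S → ℝ) : discounted Q γ c = c + γ • (Q *ᵥ discounted Q γ c) := by
  funext s
  have hsum := summable_discounted_term hQ hγ0 hγ1 c
  have hrow : ∀ v : S → ℝ, (Q *ᵥ v) s = ∑ s', Q s s' * v s' := fun v => rfl
  rw [discounted, (hsum s).tsum_eq_zero_add, pow_zero, pow_zero, one_mul, one_mulVec,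
    Pi.add_apply, Pi.smul_apply, smul_eq_mul, hrow]
  congr 1
  simp only [discounted, ← tsum_mul_left]
  rw [← Summable.tsum_finsetSum fun s' _ => (hsum s').mul_left _, ← tsum_mul_left]
  refine tsum_congr fun t => ?_
  rw [pow_succ' γ, pow_succ' Q, ← mulVec_mulVec, hrow, Finset.mul_sum, Finset.mul_sum]
  exact Finset.sum_congr rfl fun s' _ => by ring

lemma eq_discounted_of_eq_add (hQ : Q ∈ rowStochastic ℝ S) (hγ0 : 0 ≤ γ) (hγ1 : γ < 1)
    {c D : S → ℝ} (hD : D = c + γ • (Q *ᵥ D)) : D = discounted Q γ c := by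
  set E := discounted Q γ c
  have hE : E = c + γ • (Q *ᵥ E) := discounted_eq_add hQ hγ0 hγ1 c
  have hF : D - E = γ • (Q *ᵥ (D - E)) := by
    conv_lhs => rw [hD, hE]
    rw [mulVec_sub, smul_sub]
    abel
  have hle : ‖D - E‖ ≤ γ * ‖D - E‖ := by
    conv_lhs => rw [hF]
    rw [norm_smul, Real.norm_of_nonneg hγ0]
    exact mul_le_mul_of_nonneg_left (norm_mulVec_le_of_mem_rowStochastic hQ _) hγ0
  have : ‖D - E‖ = 0 := le_antisymm (by nlinarith [norm_nonneg (D - E)]) (norm_nonneg _)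
  exact sub_eq_zero.1 (norm_eq_zero.1 this)

lemma summable_vecMul_pow (hQ : Q ∈ rowStochastic ℝ S) (hγ0 : 0 ≤ γ) (hγ1 : γ < 1)
    (ρ : S → ℝ) (s : S) : Summable fun t : ℕ => γ ^ t * (ρ ᵥ* Q ^ t) s := by
  refine Summable.of_norm_bounded
    ((summable_geometric_of_lt_one hγ0 hγ1).mul_right (∑ s', ‖ρ s'‖)) fun t => ?_
  rw [norm_mul, norm_pow, Real.norm_of_nonneg hγ0]
  gcongr
  calc ‖(ρ ᵥ* Q ^ t) s‖ ≤ ∑ s', ‖ρ s' * (Q ^ t) s' s‖ := norm_sum_le _ _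
    _ ≤ ∑ s', ‖ρ s'‖ := by
      gcongr with s'
      rw [norm_mul, Real.norm_of_nonneg (nonneg_of_mem_rowStochastic (pow_mem hQ t))]
      exact mul_le_of_le_one_right (norm_nonneg _) (le_one_of_mem_rowStochastic (pow_mem hQ t))

lemma dotProduct_discounted (hQ : Q ∈ rowStochastic ℝ S) (hγ0 : 0 ≤ γ) (hγ1 : γ < 1)
    (ρ c : S → ℝ) :
    ρ ⬝ᵥ discounted Q γ c = (fun s => ∑' t : ℕ, γ ^ t * (ρ ᵥ* Q ^ t) s) ⬝ᵥ c := by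
  calc ρ ⬝ᵥ discounted Q γ c = ∑ s, ∑' t : ℕ, ρ s * (γ ^ t * (Q ^ t *ᵥ c) s) := by
        simp only [dotProduct, discounted, tsum_mul_left]
    _ = ∑' t : ℕ, γ ^ t * (ρ ⬝ᵥ (Q ^ t *ᵥ c)) := by
        rw [← Summable.tsum_finsetSum fun s _ =>
          (summable_discounted_term hQ hγ0 hγ1 c s).mul_left _]
        refine tsum_congr fun t => ?_
        rw [dotProduct, Finset.mul_sum]
        exact Finset.sum_congr rfl fun s _ => by ring
    _ = ∑' t : ℕ, ∑ s, γ ^ t * (ρ ᵥ* Q ^ t) s * c s := by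
        refine tsum_congr fun t => ?_
        rw [dotProduct_mulVec, dotProduct, Finset.mul_sum]
        exact Finset.sum_congr rfl fun s _ => by ring
    _ = _ := by
        rw [Summable.tsum_finsetSum fun s _ =>
          (summable_vecMul_pow hQ hγ0 hγ1 ρ s).mul_right _]
        simp only [dotProduct, tsum_mul_right]

end Discounted

section ProductDistribution

variable {ι : Type*} [Fintype ι] {α : ι → Type*}

def expectedDeviations (p : ∀ i, α i → ℝ) (b : ∀ i, α i) : ℝ := ∑ i, (1 - p i (b i))

lemma prod_apply_update [DecidableEq ι] (p : ∀ i, α i → ℝ) (b : ∀ i, α i) (i : ι) (x : α i) :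
    ∏ j, p j (Function.update b i x j) = p i x * ∏ j ∈ univ.erase i, p j (b j) := by
  rw [← Finset.mul_prod_erase univ _ (mem_univ i), Function.update_self]
  congr 1
  exact Finset.prod_congr rfl fun j hj => by rw [Function.update_of_ne (ne_of_mem_erase hj)]

variable [∀ i, Fintype (α i)] {p : ∀ i, α i → ℝ}

lemma expectedDeviations_nonneg (hp : ∀ i, p i ∈ stdSimplex ℝ (α i)) (b : ∀ i, α i) :
    0 ≤ expectedDeviations p b :=
  Finset.sum_nonneg fun i _ => sub_nonneg.2 (mem_Icc_of_mem_stdSimplex (hp i) _).2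

lemma one_sub_expectedDeviations_le_prod [DecidableEq ι] (hp : ∀ i, p i ∈ stdSimplex ℝ (α i))
    (b : ∀ i, α i) (T : Finset ι) : 1 - expectedDeviations p b ≤ ∏ j ∈ T, p j (b j) := by
  have hpb : ∀ j, p j (b j) ∈ Set.Icc (0 : ℝ) 1 := fun j => mem_Icc_of_mem_stdSimplex (hp j) _
  calc 1 - expectedDeviations p b ≤ 1 - ∑ j ∈ T, (1 - p j (b j)) :=
        sub_le_sub_left (Finset.sum_le_sum_of_subset_of_nonneg (subset_univ T)
          fun j _ _ => sub_nonneg.2 (hpb j).2) 1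
    _ ≤ ∏ j ∈ T, p j (b j) := one_sub_sum_le_prod (fun j _ => (hpb j).1) fun j _ => (hpb j).2

variable [∀ i, DecidableEq (α i)]

lemma sum_sigma_erase_eq_expectedDeviations (hp : ∀ i, p i ∈ stdSimplex ℝ (α i))
    (b : ∀ i, α i) :
    ∑ x ∈ univ.sigma fun i => univ.erase (b i), p x.1 x.2 = expectedDeviations p b := by
  rw [Finset.sum_sigma]
  exact Finset.sum_congr rfl fun i _ => by rw [Finset.sum_erase_eq_sub (mem_univ _), (hp i).2]

variable [DecidableEq ι] {b : ∀ i, α i}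

/-- Splits a sum over profiles into `b`, the profiles deviating from `b` in exactly one
coordinate, and the rest. -/
lemma sum_eq_add_sum_update_add (b : ∀ i, α i) (F : (∀ i, α i) → ℝ) :
    ∑ a, F a = F b + ∑ x ∈ univ.sigma fun i => univ.erase (b i), F (Function.update b x.1 x.2)
      + ∑ a ∈ (insert b ((univ.sigma fun i => univ.erase (b i)).image
          fun x => Function.update b x.1 x.2))ᶜ, F a := by
  have hinj : Set.InjOn (fun x : Σ i, α i => Function.update b x.1 x.2)
      (univ.sigma fun i => univ.erase (b i) : Finset (Σ i, α i)) := by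
    rintro ⟨i, x⟩ hx ⟨j, y⟩ - hxy
    have hx : x ≠ b i := ne_of_mem_erase (Finset.mem_sigma.1 hx).2
    obtain rfl : i = j := by
      by_contra hij
      exact hx (by simpa [Function.update_of_ne hij] using congrFun hxy i)
    simpa using congrFun hxy i
  have hb : b ∉ (univ.sigma fun i => univ.erase (b i)).image
      fun x : Σ i, α i => Function.update b x.1 x.2 := by
    simp only [Finset.mem_image, Finset.mem_sigma, mem_univ, Finset.mem_erase, true_and,
      and_true, not_exists, not_and]
    intro x hx h
    exact hx (by simpa using congrFun h x.1)
  rw [← Finset.sum_add_sum_compl (insert b _), Finset.sum_insert hb, Finset.sum_image hinj,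
    add_assoc]

/-- Single deviations from `b` contribute at most `-Δ (1 - m) m`, and profiles deviating in two or
more coordinates have total mass at most `m²`, where `m = expectedDeviations p b`. -/
lemma sum_prod_mul_le_of_forall_update_le (hp : ∀ i, p i ∈ stdSimplex ℝ (α i))
    {f : (∀ i, α i) → ℝ} {Δ M : ℝ} (hΔ : 0 ≤ Δ) (hM : ∀ a, f a ≤ M) (hb : f b = 0)
    (hdev : ∀ i x, x ≠ b i → f (Function.update b i x) ≤ -Δ) :
    ∑ a, (∏ i, p i (a i)) * f a ≤ expectedDeviations p b *
      (M * expectedDeviations p b - Δ * (1 - expectedDeviations p b)) := by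
  set m := expectedDeviations p b
  set D : Finset (Σ i, α i) := univ.sigma fun i => univ.erase (b i)
  set R := (insert b (D.image fun x => Function.update b x.1 x.2))ᶜ
  have hprod := one_sub_expectedDeviations_le_prod hp b
  have hmass : ∑ x ∈ D, p x.1 x.2 = m := sum_sigma_erase_eq_expectedDeviations hp b
  have hsingle : ∑ x ∈ D, (∏ j, p j (Function.update b x.1 x.2 j))
      * f (Function.update b x.1 x.2) ≤ -(Δ * (1 - m) * m) := calc
    _ ≤ ∑ x ∈ D, -(Δ * (1 - m)) * p x.1 x.2 := by
      refine Finset.sum_le_sum fun x hx => ?_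
      have hfx := hdev x.1 x.2 (ne_of_mem_erase (Finset.mem_sigma.1 hx).2)
      have hpx := (hp x.1).1 x.2
      have hq0 : 0 ≤ ∏ j ∈ univ.erase x.1, p j (b j) := Finset.prod_nonneg fun j _ => (hp j).1 _
      rw [prod_apply_update]
      nlinarith [mul_le_mul_of_nonneg_left hfx (mul_nonneg hpx hq0),
        mul_le_mul_of_nonneg_left (hprod (univ.erase x.1)) (mul_nonneg hΔ hpx)]
    _ = -(Δ * (1 - m) * m) := by rw [← Finset.mul_sum, hmass]; ring
  have hsingle_mass : (1 - m) * m ≤ ∑ x ∈ D, ∏ j, p j (Function.update b x.1 x.2 j) := calc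
    (1 - m) * m = ∑ x ∈ D, (1 - m) * p x.1 x.2 := by rw [← Finset.mul_sum, hmass]
    _ ≤ _ := Finset.sum_le_sum fun x _ => by
      rw [prod_apply_update, mul_comm (p _ _)]
      exact mul_le_mul_of_nonneg_right (hprod _) ((hp x.1).1 x.2)
  have hrest_mass : ∑ a ∈ R, ∏ j, p j (a j) ≤ m * m := by
    have htotal := sum_eq_add_sum_update_add b fun a => ∏ j, p j (a j)
    rw [← Fintype.prod_sum, Finset.prod_eq_one fun i _ => (hp i).2] at htotal
    nlinarith [hprod univ]
  have hrest : ∑ a ∈ R, (∏ j, p j (a j)) * f a ≤ M * (m * m) := by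
    calc ∑ a ∈ R, (∏ j, p j (a j)) * f a ≤ ∑ a ∈ R, (∏ j, p j (a j)) * M :=
          Finset.sum_le_sum fun a _ =>
            mul_le_mul_of_nonneg_left (hM a) (Finset.prod_nonneg fun j _ => (hp j).1 _)
      _ ≤ M * (m * m) := by
          rw [← Finset.sum_mul, mul_comm]
          exact mul_le_mul_of_nonneg_left hrest_mass (hb ▸ hM b)
  rw [sum_eq_add_sum_update_add b, hb, mul_zero, zero_add]
  nlinarith

end ProductDistribution

section Chain

variable {n : ℕ} {S : Type} {A : Fin n → Type} {P : S → (∀ i, A i) → S → ℝ}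
  {θ θ' : ∀ i, S → A i → ℝ} {γ : ℝ}

lemma jointPi_update (i : Fin n) (θi : S → A i → ℝ) (s : S) (a : ∀ i, A i) :
    jointPi (Function.update θ i θi) s a = θi s (a i) * ∏ j ∈ univ.erase i, θ j s (a j) := by
  rw [jointPi, ← Finset.mul_prod_erase univ _ (mem_univ i), Function.update_self]
  congr 1
  exact Finset.prod_congr rfl fun j hj => by rw [Function.update_of_ne (ne_of_mem_erase hj)]

variable [∀ i, Fintype (A i)]

lemma jointPi_nonneg (hθ : feasible θ) (s : S) (a : ∀ i, A i) : 0 ≤ jointPi θ s a :=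
  Finset.prod_nonneg fun i _ => (hθ i s).1 (a i)

lemma sum_jointPi (hθ : feasible θ) (s : S) : ∑ a, jointPi θ s a = 1 := by
  simp only [jointPi, ← Fintype.prod_sum, fun i => (hθ i s).2, Finset.prod_const_one]

lemma feasible_update (hθ : feasible θ) {i : Fin n} {θi : S → A i → ℝ}
    (hθi : feasibleAgent i θi) : feasible (Function.update θ i θi) := by
  intro j
  rcases eq_or_ne j i with rfl | hj
  · rwa [Function.update_self]
  · rw [Function.update_of_ne hj]
    exact hθ j

lemma feasibleAgent_update [DecidableEq S] {i : Fin n} {θi : S → A i → ℝ}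
    (hθi : feasibleAgent i θi) {s : S} {w : A i → ℝ} (hw : w ∈ stdSimplex ℝ (A i)) :
    feasibleAgent i (Function.update θi s w) := by
  intro s'
  rcases eq_or_ne s' s with rfl | hs
  · rw [Function.update_self]
    exact hw
  · rw [Function.update_of_ne hs]
    exact hθi s'

variable [Fintype S] [DecidableEq S]

def transMat (P : S → (∀ i, A i) → S → ℝ) (θ : ∀ i, S → A i → ℝ) : Matrix S S ℝ :=
  Matrix.of fun s s' => ∑ a, jointPi θ s a * P s a s'

lemma transMat_mem_rowStochastic (hP : stochMat P) (hθ : feasible θ) :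
    transMat P θ ∈ rowStochastic ℝ S := by
  refine mem_rowStochastic_iff_sum.2 ⟨fun s s' => ?_, fun s => ?_⟩
  · exact Finset.sum_nonneg fun a _ => mul_nonneg (jointPi_nonneg hθ s a) ((hP s a).1 s')
  · simp only [transMat, Matrix.of_apply]
    rw [Finset.sum_comm]
    simp only [← Finset.mul_sum, fun a => (hP s a).2, mul_one, sum_jointPi hθ]

lemma visit_eq_vecMul_pow (t : ℕ) (μ : S → ℝ) : visit P θ t μ = μ ᵥ* transMat P θ ^ t := by
  induction t with
  | zero => simp [visit]
  | succ t ih =>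
    rw [visit, Function.iterate_succ_apply', ← visit, ih, pow_succ, ← vecMul_vecMul]
    funext s'
    simp only [stepDist, vecMul, dotProduct, transMat, Matrix.of_apply, Finset.mul_sum]
    exact Finset.sum_congr rfl fun s _ => Finset.sum_congr rfl fun a _ => by ring

lemma Vval_eq_discounted (f : S → (∀ i, A i) → ℝ) :
    Vval P θ γ f = discounted (transMat P θ) γ (expRew f θ) := by
  funext s
  refine tsum_congr fun t => ?_
  have hδ : deltaDist s = Pi.single s (1 : ℝ) := by
    funext s'
    simp [deltaDist, Pi.single_apply]
  rw [visit_eq_vecMul_pow, hδ, single_one_vecMul]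
  rfl

lemma dvisit_eq (ρ : S → ℝ) (s : S) :
    dvisit P θ γ ρ s = (1 - γ) * ∑' t : ℕ, γ ^ t * (ρ ᵥ* transMat P θ ^ t) s := by
  simp only [dvisit, visit_eq_vecMul_pow]

lemma Vval_eq_add (hP : stochMat P) (hθ : feasible θ) (hγ0 : 0 ≤ γ) (hγ1 : γ < 1)
    (f : S → (∀ i, A i) → ℝ) :
    Vval P θ γ f = expRew f θ + γ • (transMat P θ *ᵥ Vval P θ γ f) := by
  rw [Vval_eq_discounted]
  exact discounted_eq_add (transMat_mem_rowStochastic hP hθ) hγ0 hγ1 _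

lemma sum_jointPi_mul_Qval (f : S → (∀ i, A i) → ℝ) (s : S) :
    ∑ a, jointPi θ' s a * Qval P θ γ f s a
      = expRew f θ' s + γ * (transMat P θ' *ᵥ Vval P θ γ f) s := by
  simp only [Qval, mul_add, Finset.sum_add_distrib, expRew, mulVec, dotProduct, transMat,
    Matrix.of_apply, Finset.mul_sum, Finset.sum_mul]
  rw [Finset.sum_comm]
  exact congrArg _ (Finset.sum_congr rfl fun s' _ => Finset.sum_congr rfl fun a _ => by ring)

lemma sum_jointPi_mul_Qval_self (hP : stochMat P) (hθ : feasible θ) (hγ0 : 0 ≤ γ)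
    (hγ1 : γ < 1) (f : S → (∀ i, A i) → ℝ) (s : S) :
    ∑ a, jointPi θ s a * Qval P θ γ f s a = Vval P θ γ f s := by
  rw [sum_jointPi_mul_Qval]
  exact (congrFun (Vval_eq_add hP hθ hγ0 hγ1 f) s).symm

/-- The performance difference lemma. -/
lemma Jval_sub_Jval (hP : stochMat P) (hθ' : feasible θ') (hγ0 : 0 ≤ γ)
    (hγ1 : γ < 1) (f : S → (∀ i, A i) → ℝ) (ρ : S → ℝ) :
    Jval P θ' γ f ρ - Jval P θ γ f ρ = (1 - γ)⁻¹ * ∑ s, dvisit P θ' γ ρ s *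
      (∑ a, jointPi θ' s a * Qval P θ γ f s a - Vval P θ γ f s) := by
  set g : S → ℝ := fun s => ∑ a, jointPi θ' s a * Qval P θ γ f s a - Vval P θ γ f s
  have hQ := transMat_mem_rowStochastic hP hθ'
  have hg : Vval P θ' γ f - Vval P θ γ f = discounted (transMat P θ') γ g := by
    refine eq_discounted_of_eq_add hQ hγ0 hγ1 ?_
    funext s
    have h := congrFun (Vval_eq_add hP hθ' hγ0 hγ1 f) s
    simp only [Pi.add_apply, Pi.sub_apply, Pi.smul_apply, smul_eq_mul, mulVec_sub] at h ⊢
    simp only [g, sum_jointPi_mul_Qval]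
    linarith
  have hJ : Jval P θ' γ f ρ - Jval P θ γ f ρ = ρ ⬝ᵥ (Vval P θ' γ f - Vval P θ γ f) := by
    rw [dotProduct_sub]
    rfl
  rw [hJ, hg, dotProduct_discounted hQ hγ0 hγ1, dotProduct, Finset.mul_sum]
  refine Finset.sum_congr rfl fun s _ => ?_
  rw [dvisit_eq]
  simp only [g]
  field_simp [(by linarith : (1 - γ) ≠ 0)]

end Chain

section Deviation

variable {n : ℕ} {S : Type} [Fintype S] [DecidableEq S] {A : Fin n → Type}
  [∀ i, Fintype (A i)] [∀ i, DecidableEq (A i)]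
  {P : S → (∀ i, A i) → S → ℝ} {θ : ∀ i, S → A i → ℝ} {γ : ℝ}

lemma sum_jointPi_update_mul_Qval (i : Fin n) (θi : S → A i → ℝ) (f : S → (∀ i, A i) → ℝ)
    (s : S) : ∑ a, jointPi (Function.update θ i θi) s a * Qval P θ γ f s a
      = ∑ x, θi s x * Qbar P θ γ f i s x := by
  simp only [Qbar, Finset.mul_sum, mul_ite, mul_zero]
  rw [Finset.sum_comm]
  refine Finset.sum_congr rfl fun a _ => ?_
  rw [Finset.sum_ite_eq, if_pos (mem_univ _), jointPi_update, mul_assoc]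

lemma sum_mul_Abar (i : Fin n) {θi : S → A i → ℝ} (hθi : feasibleAgent i θi)
    (f : S → (∀ i, A i) → ℝ) (s : S) : ∑ x, θi s x * Abar P θ γ f i s x
      = ∑ a, jointPi (Function.update θ i θi) s a * Qval P θ γ f s a - Vval P θ γ f s := by
  simp only [Abar, mul_sub, Finset.sum_sub_distrib, ← Finset.sum_mul, (hθi s).2, one_mul,
    sum_jointPi_update_mul_Qval]

lemma sum_mul_Abar_self (hP : stochMat P) (hθ : feasible θ) (hγ0 : 0 ≤ γ) (hγ1 : γ < 1)
    (i : Fin n) (f : S → (∀ i, A i) → ℝ) (s : S) : ∑ x, θ i s x * Abar P θ γ f i s x = 0 := by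
  rw [sum_mul_Abar i (hθ i), Function.update_eq_self,
    sum_jointPi_mul_Qval_self hP hθ hγ0 hγ1, sub_self]

lemma Jval_update_sub (hP : stochMat P) (hθ : feasible θ) {i : Fin n} {θi : S → A i → ℝ}
    (hθi : feasibleAgent i θi) (hγ0 : 0 ≤ γ) (hγ1 : γ < 1) (f : S → (∀ i, A i) → ℝ)
    (ρ : S → ℝ) : Jval P (Function.update θ i θi) γ f ρ - Jval P θ γ f ρ
      = (1 - γ)⁻¹ * ∑ s, dvisit P (Function.update θ i θi) γ ρ s *
          ∑ x, θi s x * Abar P θ γ f i s x := by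
  simp only [sum_mul_Abar i hθi]
  exact Jval_sub_Jval hP (feasible_update hθ hθi) hγ0 hγ1 f ρ

lemma Jval_update_update_sub (hP : stochMat P) (hθ : feasible θ) {i : Fin n} {s : S}
    {w : A i → ℝ} (hw : w ∈ stdSimplex ℝ (A i)) (hγ0 : 0 ≤ γ) (hγ1 : γ < 1)
    (f : S → (∀ i, A i) → ℝ) (ρ : S → ℝ) :
    Jval P (Function.update θ i (Function.update (θ i) s w)) γ f ρ - Jval P θ γ f ρ
      = (1 - γ)⁻¹ * (dvisit P (Function.update θ i (Function.update (θ i) s w)) γ ρ s *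
          ∑ x, w x * Abar P θ γ f i s x) := by
  rw [Jval_update_sub hP hθ (feasibleAgent_update (hθ i) hw) hγ0 hγ1, Fintype.sum_eq_single s,
    Function.update_self]
  intro s' hs'
  rw [Function.update_of_ne hs', sum_mul_Abar_self hP hθ hγ0 hγ1, mul_zero]

end Deviation

lemma Jval_update_sub_eq_of_isPotential {n : ℕ} {S : Type} [Fintype S] [DecidableEq S]
    {A : Fin n → Type} [∀ i, Fintype (A i)] {P : S → (∀ i, A i) → S → ℝ} {γ : ℝ}
    {r : Fin n → S → (∀ i, A i) → ℝ} {φ : S → (∀ i, A i) → ℝ} (hpot : isPotential P γ r φ)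
    {θ : ∀ i, S → A i → ℝ} (hθ : feasible θ) {i : Fin n} {θi : S → A i → ℝ}
    (hθi : feasibleAgent i θi) (ρ : S → ℝ) :
    Jval P (Function.update θ i θi) γ (r i) ρ - Jval P θ γ (r i) ρ
      = Jval P (Function.update θ i θi) γ φ ρ - Jval P θ γ φ ρ := by
  simp only [Jval, ← Finset.sum_sub_distrib, ← mul_sub, hpot θ hθ i θi hθi]

lemma abs_sub_le_sqrt_polNormSq {n : ℕ} {S : Type} [Fintype S] {A : Fin n → Type}
    [∀ i, Fintype (A i)] (x y : ∀ i, S → A i → ℝ) (i : Fin n) (s : S) (a : A i) :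
    |x i s a - y i s a| ≤ Real.sqrt (polNormSq x y) := by
  refine Real.abs_le_sqrt ?_
  have hnn : ∀ j s' (a' : A j), 0 ≤ (x j s' a' - y j s' a') ^ 2 := fun _ _ _ => sq_nonneg _
  unfold polNormSq
  calc (x i s a - y i s a) ^ 2 ≤ ∑ a', (x i s a' - y i s a') ^ 2 :=
        Finset.single_le_sum (f := fun a' => (x i s a' - y i s a') ^ 2)
          (fun a' _ => hnn i s a') (mem_univ a)
    _ ≤ ∑ s', ∑ a', (x i s' a' - y i s' a') ^ 2 :=
        Finset.single_le_sum (f := fun s' => ∑ a', (x i s' a' - y i s' a') ^ 2)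
          (fun s' _ => Finset.sum_nonneg fun a' _ => hnn i s' a') (mem_univ s)
    _ ≤ ∑ j, ∑ s', ∑ a', (x j s' a' - y j s' a') ^ 2 :=
        Finset.single_le_sum (f := fun j => ∑ s', ∑ a', (x j s' a' - y j s' a') ^ 2)
          (fun j _ => Finset.sum_nonneg fun s' _ => Finset.sum_nonneg fun a' _ => hnn j s' a')
          (mem_univ i)

lemma polNormSq_update_update {n : ℕ} {S : Type} [Fintype S] [DecidableEq S] {A : Fin n → Type}
    [∀ i, Fintype (A i)] (θ : ∀ i, S → A i → ℝ) (i : Fin n) (s : S) (w : A i → ℝ) :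
    polNormSq (Function.update θ i (Function.update (θ i) s w)) θ = ∑ a, (w a - θ i s a) ^ 2 := by
  rw [polNormSq, Fintype.sum_eq_single i, Function.update_self, Fintype.sum_eq_single s,
    Function.update_self]
  · intro s' hs'
    simp [Function.update_of_ne hs']
  · intro j hj
    simp [Function.update_of_ne hj]

lemma sqrt_polNormSq_update_update_add_smul {n : ℕ} {S : Type} [Fintype S] [DecidableEq S]
    {A : Fin n → Type} [∀ i, Fintype (A i)] (θ : ∀ i, S → A i → ℝ) (i : Fin n) (s : S)
    (w : A i → ℝ) {t : ℝ} (ht : 0 ≤ t) :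
    Real.sqrt (polNormSq (Function.update θ i (Function.update (θ i) s (θ i s + t • (w - θ i s))))
      θ) = t * Real.sqrt (∑ a, (w a - θ i s a) ^ 2) := by
  have h : ∑ a, ((θ i s + t • (w - θ i s)) a - θ i s a) ^ 2
      = t ^ 2 * ∑ a, (w a - θ i s a) ^ 2 := by
    rw [Finset.mul_sum]
    refine Finset.sum_congr rfl fun a _ => ?_
    simp only [Pi.add_apply, Pi.smul_apply, Pi.sub_apply, smul_eq_mul]
    ring
  rw [polNormSq_update_update, h, Real.sqrt_mul (sq_nonneg t), Real.sqrt_sq ht]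

def IsStrictLocalMaxOnFeasible {n : ℕ} {S : Type} [Fintype S] {A : Fin n → Type}
    [∀ i, Fintype (A i)] (Φ : (∀ i, S → A i → ℝ) → ℝ) (θ : ∀ i, S → A i → ℝ) : Prop :=
  ∃ δ > (0 : ℝ), ∀ θ' : ∀ i, S → A i → ℝ, feasible θ' → θ' ≠ θ →
    Real.sqrt (polNormSq θ' θ) ≤ δ → Φ θ' < Φ θ

section PurePolicy

variable {n : ℕ} {S : Type} {A : Fin n → Type} [∀ i, DecidableEq (A i)] (astar : ∀ i, S → A i)

lemma purePol_apply (i : Fin n) (s : S) : purePol astar i s = Pi.single (astar i s) 1 := by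
  funext a
  simp [purePol, Pi.single_apply]

lemma update_purePol (i : Fin n) (x : A i) :
    Function.update (purePol astar) i (fun _ => Pi.single x 1)
      = purePol (Function.update astar i fun _ => x) := by
  funext j s
  rcases eq_or_ne j i with rfl | hj
  · simp [purePol_apply]
  · simp [Function.update_of_ne hj, purePol_apply]

variable [∀ i, Fintype (A i)]

lemma feasible_purePol : feasible (purePol astar) := fun i s => by
  rw [purePol_apply]
  exact single_mem_stdSimplex ℝ _

lemma sum_jointPi_purePol_mul (s : S) (F : (∀ i, A i) → ℝ) :
    ∑ a, jointPi (purePol astar) s a * F a = F fun i => astar i s := by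
  simp only [jointPi, purePol, Fintype.prod_boole, ← funext_iff, ite_mul, one_mul, zero_mul,
    Finset.sum_ite_eq', mem_univ, if_true]

lemma exists_expectedDeviations_pos {θ : ∀ i, S → A i → ℝ} (hθ : feasible θ)
    (hne : θ ≠ purePol astar) :
    ∃ s, 0 < expectedDeviations (fun i => θ i s) (fun i => astar i s) := by
  obtain ⟨i, hi⟩ := Function.ne_iff.1 hne
  obtain ⟨s, hs⟩ := Function.ne_iff.1 hi
  rw [purePol_apply] at hs
  refine ⟨s, (sub_pos.2 (apply_lt_one_of_ne_single (hθ i s) hs)).trans_le ?_⟩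
  exact Finset.single_le_sum (f := fun j => 1 - θ j s (astar j s))
    (fun j _ => sub_nonneg.2 (mem_Icc_of_mem_stdSimplex (hθ j s) _).2) (mem_univ i)

variable [Fintype S]

lemma expectedDeviations_le_of_sqrt_polNormSq_le {θ : ∀ i, S → A i → ℝ} {δ : ℝ}
    (hδ : Real.sqrt (polNormSq θ (purePol astar)) ≤ δ) (s : S) :
    expectedDeviations (fun i => θ i s) (fun i => astar i s) ≤ n * δ := by
  calc expectedDeviations (fun i => θ i s) (fun i => astar i s) ≤ ∑ _i : Fin n, δ := by
        refine Finset.sum_le_sum fun i _ => ?_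
        have h := abs_sub_le_sqrt_polNormSq θ (purePol astar) i s (astar i s)
        simp only [purePol, if_true] at h
        linarith [neg_abs_le (θ i s (astar i s) - 1)]
    _ = n * δ := by simp

variable [DecidableEq S] {P : S → (∀ i, A i) → S → ℝ} {γ : ℝ}

lemma Qbar_purePol (f : S → (∀ i, A i) → ℝ) (i : Fin n) (s : S) (x : A i) :
    Qbar P (purePol astar) γ f i s x
      = Qval P (purePol astar) γ f s (Function.update (fun j => astar j s) i x) := by
  have hb : (fun j => Function.update astar i (fun _ => x) j s)
      = Function.update (fun j => astar j s) i x := by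
    funext j
    rcases eq_or_ne j i with rfl | hj
    · simp
    · simp [Function.update_of_ne hj]
  have h := sum_jointPi_update_mul_Qval (P := P) (γ := γ) (θ := purePol astar) i
    (fun _ => Pi.single x 1) f s
  simp only [update_purePol, sum_jointPi_purePol_mul, hb] at h
  simpa [Pi.single_apply] using h.symm

lemma Vval_purePol (hP : stochMat P) (hγ0 : 0 ≤ γ) (hγ1 : γ < 1) (f : S → (∀ i, A i) → ℝ)
    (s : S) : Vval P (purePol astar) γ f s = Qval P (purePol astar) γ f s fun j => astar j s := by
  rw [← sum_jointPi_mul_Qval_self hP (feasible_purePol astar) hγ0 hγ1, sum_jointPi_purePol_mul]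

lemma sum_jointPi_mul_Qval_purePol_sub_le (hP : stochMat P) (hγ0 : 0 ≤ γ) (hγ1 : γ < 1)
    {f : S → (∀ i, A i) → ℝ} {θ : ∀ i, S → A i → ℝ} (hθ : feasible θ) {Δ M : ℝ} (hΔ : 0 ≤ Δ)
    (hM : ∀ s a, Qval P (purePol astar) γ f s a - Vval P (purePol astar) γ f s ≤ M)
    (hdev : ∀ i s x, x ≠ astar i s → Abar P (purePol astar) γ f i s x ≤ -Δ) (s : S) :
    ∑ a, jointPi θ s a * Qval P (purePol astar) γ f s a - Vval P (purePol astar) γ f s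
      ≤ expectedDeviations (fun i => θ i s) (fun i => astar i s) *
        (M * expectedDeviations (fun i => θ i s) (fun i => astar i s)
          - Δ * (1 - expectedDeviations (fun i => θ i s) (fun i => astar i s))) := by
  have h := sum_prod_mul_le_of_forall_update_le (fun i => hθ i s) hΔ (hM s)
    (by rw [Vval_purePol astar hP hγ0 hγ1, sub_self])
    fun i x hx => by simpa only [Abar, Qbar_purePol] using hdev i s x hx
  refine le_of_eq_of_le ?_ h
  simp only [mul_sub, Finset.sum_sub_distrib, ← Finset.sum_mul]
  have hsum : ∑ a : ∀ i, A i, ∏ i, θ i s (a i) = 1 := sum_jointPi hθ s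
  rw [hsum, one_mul]
  rfl

end PurePolicy

section Greedy

variable {n : ℕ} {S : Type} [Fintype S] [DecidableEq S] {A : Fin n → Type}
  [∀ i, Fintype (A i)] [∀ i, DecidableEq (A i)] {P : S → (∀ i, A i) → S → ℝ} {γ : ℝ}
  {ρ : S → ℝ} {φ : S → (∀ i, A i) → ℝ} {θ : ∀ i, S → A i → ℝ}

def StrictlyGreedy (P : S → (∀ i, A i) → S → ℝ) (γ : ℝ) (φ : S → (∀ i, A i) → ℝ)
    (θ : ∀ i, S → A i → ℝ) : Prop :=
  ∀ i s, ∀ w ∈ stdSimplex ℝ (A i), w ≠ θ i s → ∑ a, w a * Abar P θ γ φ i s a < 0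

lemma sum_mul_Abar_neg_of_Jval_lt (hP : stochMat P) (hθ : feasible θ) (hγ0 : 0 ≤ γ)
    (hγ1 : γ < 1) (hd : ∀ θ, feasible θ → ∀ s, 0 < dvisit P θ γ ρ s) {i : Fin n} {s : S}
    {w : A i → ℝ} (hw : w ∈ stdSimplex ℝ (A i))
    (hlt : Jval P (Function.update θ i (Function.update (θ i) s w)) γ φ ρ < Jval P θ γ φ ρ) :
    ∑ a, w a * Abar P θ γ φ i s a < 0 := by
  rw [← sub_neg, Jval_update_update_sub hP hθ hw hγ0 hγ1] at hlt
  have hpos := hd _ (feasible_update hθ (feasibleAgent_update (hθ i) (s := s) hw)) s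
  exact neg_of_mul_neg_right (neg_of_mul_neg_right hlt (inv_nonneg.2 (by linarith))) hpos.le

lemma strictlyGreedy_of_strictNE {r : Fin n → S → (∀ i, A i) → ℝ} (hP : stochMat P)
    (hγ0 : 0 ≤ γ) (hγ1 : γ < 1) (hpot : isPotential P γ r φ)
    (hd : ∀ θ, feasible θ → ∀ s, 0 < dvisit P θ γ ρ s) (hNE : strictNE P γ r ρ θ) :
    StrictlyGreedy P γ φ θ := by
  intro i s w hw hne
  have hθi := feasibleAgent_update (hNE.1 i) (s := s) hw
  refine sum_mul_Abar_neg_of_Jval_lt hP hNE.1 hγ0 hγ1 hd hw ?_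
  have hlt := hNE.2 i _ hθi fun h => hne (by simpa using congrFun h s)
  have := Jval_update_sub_eq_of_isPotential hpot hNE.1 hθi ρ
  linarith

lemma strictlyGreedy_of_isStrictLocalMaxOnFeasible (hP : stochMat P) (hθ : feasible θ)
    (hγ0 : 0 ≤ γ) (hγ1 : γ < 1) (hd : ∀ θ, feasible θ → ∀ s, 0 < dvisit P θ γ ρ s)
    (hmax : IsStrictLocalMaxOnFeasible (fun θ => Jval P θ γ φ ρ) θ) :
    StrictlyGreedy P γ φ θ := by
  obtain ⟨δ, hδ, hmax⟩ := hmax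
  intro i s w hw hne
  set c := Real.sqrt (∑ a, (w a - θ i s a) ^ 2)
  have hsmall : ∀ᶠ t in 𝓝[>] (0 : ℝ), (t ≤ 1 ∧ t * c < δ) ∧ 0 < t := by
    refine (Eventually.filter_mono nhdsWithin_le_nhds
      ((eventually_le_nhds one_pos).and ?_)).and self_mem_nhdsWithin
    exact ((continuous_id.mul continuous_const).tendsto' 0 0 (zero_mul c)).eventually
      (eventually_lt_nhds hδ)
  obtain ⟨t, ⟨ht1, htc⟩, ht0⟩ := hsmall.exists
  set wt := θ i s + t • (w - θ i s)
  have hwt : wt ∈ stdSimplex ℝ (A i) :=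
    (convex_stdSimplex ℝ (A i)).add_smul_sub_mem (hθ i s) hw ⟨ht0.le, ht1⟩
  have hne' : Function.update θ i (Function.update (θ i) s wt) ≠ θ := by
    intro h
    have : t • (w - θ i s) = 0 := by
      simpa [wt] using congrFun (congrFun h i) s
    exact hne (sub_eq_zero.1 ((smul_eq_zero.1 this).resolve_left ht0.ne'))
  have hdist : Real.sqrt (polNormSq (Function.update θ i (Function.update (θ i) s wt)) θ) ≤ δ :=
    (sqrt_polNormSq_update_update_add_smul θ i s w ht0.le).trans_le htc.le
  have hlt := sum_mul_Abar_neg_of_Jval_lt hP hθ hγ0 hγ1 hd hwt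
    (hmax _ (feasible_update hθ (feasibleAgent_update (hθ i) hwt)) hne' hdist)
  have hsum : ∑ a, wt a * Abar P θ γ φ i s a = t * ∑ a, w a * Abar P θ γ φ i s a := by
    have h0 := sum_mul_Abar_self hP hθ hγ0 hγ1 i φ s
    simp only [wt, Pi.add_apply, Pi.smul_apply, Pi.sub_apply, smul_eq_mul, add_mul, sub_mul,
      Finset.sum_add_distrib, mul_assoc, ← Finset.mul_sum, Finset.sum_sub_distrib, h0]
    ring
  rw [hsum] at hlt
  exact neg_of_mul_neg_right hlt ht0.le

namespace StrictlyGreedy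

lemma sum_mul_Abar_nonpos (hP : stochMat P) (hθ : feasible θ) (hγ0 : 0 ≤ γ) (hγ1 : γ < 1)
    (hg : StrictlyGreedy P γ φ θ) {i : Fin n} {s : S} {w : A i → ℝ}
    (hw : w ∈ stdSimplex ℝ (A i)) : ∑ a, w a * Abar P θ γ φ i s a ≤ 0 := by
  by_cases h : w = θ i s
  · rw [h, sum_mul_Abar_self hP hθ hγ0 hγ1]
  · exact (hg i s w hw h).le

lemma strictNE {r : Fin n → S → (∀ i, A i) → ℝ} (hP : stochMat P) (hθ : feasible θ)
    (hγ0 : 0 ≤ γ) (hγ1 : γ < 1) (hpot : isPotential P γ r φ)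
    (hd : ∀ θ, feasible θ → ∀ s, 0 < dvisit P θ γ ρ s) (hg : StrictlyGreedy P γ φ θ) :
    strictNE P γ r ρ θ := by
  refine ⟨hθ, fun i θi hθi hne => ?_⟩
  obtain ⟨s, hs⟩ := Function.ne_iff.1 hne
  rw [← sub_neg, Jval_update_sub_eq_of_isPotential hpot hθ hθi,
    Jval_update_sub hP hθ hθi hγ0 hγ1]
  exact inv_one_sub_mul_sum_mul_neg hγ1 (fun s => hd _ (feasible_update hθ hθi) s)
    (fun s => hg.sum_mul_Abar_nonpos hP hθ hγ0 hγ1 (hθi s)) ⟨s, hg i s _ (hθi s) hs⟩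

/-- Since the weights `θ i s` average `Abar` to zero, a mixed `θ i s` would make some point mass
`Pi.single x 1` a weakly better response. -/
lemma exists_eq_purePol (hP : stochMat P) (hθ : feasible θ) (hγ0 : 0 ≤ γ) (hγ1 : γ < 1)
    (hg : StrictlyGreedy P γ φ θ) : ∃ astar, θ = purePol astar := by
  have hpure : ∀ i s, ∃ x, θ i s = Pi.single x 1 := by
    intro i s
    by_contra! hmixed
    have hneg : ∀ x, Abar P θ γ φ i s x < 0 := fun x => by
      simpa [Pi.single_apply] using
        hg i s _ (single_mem_stdSimplex ℝ x) (hmixed x).symm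
    obtain ⟨x, -, hx⟩ := Finset.exists_lt_of_sum_lt (s := univ) (f := fun _ => (0 : ℝ))
      (g := θ i s) (by rw [(hθ i s).2, Finset.sum_const_zero]; exact one_pos)
    have : ∑ a, θ i s a * Abar P θ γ φ i s a < 0 :=
      Finset.sum_neg' (fun a _ => mul_nonpos_of_nonneg_of_nonpos ((hθ i s).1 a) (hneg a).le)
        ⟨x, mem_univ x, mul_neg_of_pos_of_neg hx (hneg x)⟩
    linarith [sum_mul_Abar_self hP hθ hγ0 hγ1 i φ s]
  choose astar hastar using hpure
  exact ⟨astar, funext fun i => funext fun s => (hastar i s).trans (purePol_apply astar i s).symm⟩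

lemma Abar_purePol_neg {astar : ∀ i, S → A i} (hg : StrictlyGreedy P γ φ (purePol astar))
    {i : Fin n} {s : S} {x : A i} (hx : x ≠ astar i s) : Abar P (purePol astar) γ φ i s x < 0 := by
  have hne : Pi.single x (1 : ℝ) ≠ purePol astar i s := by
    rw [purePol_apply]
    intro h
    simpa [hx] using congrFun h x
  simpa [Pi.single_apply] using hg i s _ (single_mem_stdSimplex ℝ x) hne

lemma isStrictLocalMaxOnFeasible_purePol (hP : stochMat P) (hγ0 : 0 ≤ γ) (hγ1 : γ < 1)
    (hd : ∀ θ, feasible θ → ∀ s, 0 < dvisit P θ γ ρ s) {astar : ∀ i, S → A i}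
    (hg : StrictlyGreedy P γ φ (purePol astar)) :
    IsStrictLocalMaxOnFeasible (fun θ => Jval P θ γ φ ρ) (purePol astar) := by
  obtain ⟨Δ, hΔ, hdev⟩ := exists_pos_forall_le_neg
    (fun k : Σ i, S × A i => Abar P (purePol astar) γ φ k.1 k.2.1 k.2.2)
    (fun k => k.2.2 ≠ astar k.1 k.2.1) fun _ hk => hg.Abar_purePol_neg hk
  obtain ⟨M, hM0, hM⟩ : ∃ M, 0 ≤ M ∧ ∀ s a,
      Qval P (purePol astar) γ φ s a - Vval P (purePol astar) γ φ s ≤ M := by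
    obtain ⟨M, hM⟩ := Finite.exists_le fun sa : S × (∀ i, A i) =>
      Qval P (purePol astar) γ φ sa.1 sa.2 - Vval P (purePol astar) γ φ sa.1
    exact ⟨max M 0, le_max_right _ _, fun s a => (hM (s, a)).trans (le_max_left _ _)⟩
  refine ⟨Δ / ((n + 1) * (Δ + M)), by positivity, fun θ hθ hne hdist => ?_⟩
  set m := fun s => expectedDeviations (fun i => θ i s) (fun i => astar i s)
  have hsmall : ∀ s, m s * (Δ + M) < Δ := fun s => calc
    m s * (Δ + M) ≤ n * (Δ / ((n + 1) * (Δ + M))) * (Δ + M) := by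
      gcongr
      exact expectedDeviations_le_of_sqrt_polNormSq_le astar hdist s
    _ = n / (n + 1) * Δ := by field_simp
    _ < Δ := mul_lt_of_lt_one_left hΔ ((div_lt_one (by positivity)).2 (by linarith))
  have hstate : ∀ s, ∑ a, jointPi θ s a * Qval P (purePol astar) γ φ s a
      - Vval P (purePol astar) γ φ s ≤ m s * (M * m s - Δ * (1 - m s)) :=
    sum_jointPi_mul_Qval_purePol_sub_le astar hP hγ0 hγ1 hθ hΔ.le hM
      fun i s x hx => hdev ⟨i, s, x⟩ hx
  have hneg : ∀ s, 0 < m s → m s * (M * m s - Δ * (1 - m s)) < 0 :=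
    fun s hs => mul_neg_of_pos_of_neg hs (by nlinarith [hsmall s])
  obtain ⟨s0, hs0⟩ := exists_expectedDeviations_pos astar hθ hne
  show Jval P θ γ φ ρ < Jval P (purePol astar) γ φ ρ
  rw [← sub_neg, Jval_sub_Jval hP hθ hγ0 hγ1]
  refine inv_one_sub_mul_sum_mul_neg hγ1 (hd θ hθ) (fun s => (hstate s).trans ?_)
    ⟨s0, (hstate s0).trans_lt (hneg s0 hs0)⟩
  rcases (expectedDeviations_nonneg (fun i => hθ i s) (fun i => astar i s)).eq_or_lt with h | h
  · simp only [m, ← h, zero_mul, le_refl]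
  · exact (hneg s h).le

end StrictlyGreedy

end Greedy

end MAMDP

theorem stmt13_general {n : ℕ} {S : Type} [Fintype S] [DecidableEq S]
    {A : Fin n → Type} [∀ i, Fintype (A i)]
    (P : S → (∀ i, A i) → S → ℝ) (hP : stochMat P)
    (r : Fin n → S → (∀ i, A i) → ℝ)
    (γ : ℝ) (hγ0 : 0 ≤ γ) (hγ1 : γ < 1)
    (ρ : S → ℝ)
    (φ : S → (∀ i, A i) → ℝ) (hpot : isPotential P γ r φ)
    (hd : ∀ θ : ∀ i, S → A i → ℝ, feasible θ → ∀ s, 0 < dvisit P θ γ ρ s)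
    (θstar : ∀ i, S → A i → ℝ) :
    strictNE P γ r ρ θstar ↔
      (feasible θstar ∧ ∃ δ > (0 : ℝ), ∀ θ : ∀ i, S → A i → ℝ, feasible θ →
        θ ≠ θstar → Real.sqrt (polNormSq θ θstar) ≤ δ →
        Jval P θ γ φ ρ < Jval P θstar γ φ ρ) := by
  classical
  constructor
  · intro hNE
    have hg := strictlyGreedy_of_strictNE hP hγ0 hγ1 hpot hd hNE
    obtain ⟨astar, rfl⟩ := hg.exists_eq_purePol hP hNE.1 hγ0 hγ1
    exact ⟨hNE.1, hg.isStrictLocalMaxOnFeasible_purePol hP hγ0 hγ1 hd⟩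
  · rintro ⟨hθ, hmax⟩
    exact (strictlyGreedy_of_isStrictLocalMaxOnFeasible hP hθ hγ0 hγ1 hd hmax).strictNE
      hP hθ hγ0 hγ1 hpot hd

/-- In a Markov potential game (with all states visited with positive probability),
strict Nash equilibria are exactly the strict local maxima of the total potential
function `Φ = Jval P · γ φ ρ` on the feasible set. -/
theorem stmt13 {n : ℕ} {S : Type} [Fintype S] [DecidableEq S]
    {A : Fin n → Type} [∀ i, Fintype (A i)] [∀ i, DecidableEq (A i)]
    (P : S → (∀ i, A i) → S → ℝ) (hP : stochMat P)
    (r : Fin n → S → (∀ i, A i) → ℝ) (hr : ∀ i s a, 0 ≤ r i s a ∧ r i s a ≤ 1)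
    (γ : ℝ) (hγ0 : 0 ≤ γ) (hγ1 : γ < 1)
    (ρ : S → ℝ) (hρ : initDist ρ)
    (φ : S → (∀ i, A i) → ℝ) (hpot : isPotential P γ r φ)
    (hd : ∀ θ : ∀ i, S → A i → ℝ, feasible θ → ∀ s, 0 < dvisit P θ γ ρ s)
    (θstar : ∀ i, S → A i → ℝ) :
    strictNE P γ r ρ θstar ↔
      (feasible θstar ∧ ∃ δ > (0 : ℝ), ∀ θ : ∀ i, S → A i → ℝ, feasible θ →
        θ ≠ θstar → Real.sqrt (polNormSq θ θstar) ≤ δ →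
        Jval P θ γ φ ρ < Jval P θstar γ φ ρ) :=
  stmt13_general P hP r γ hγ0 hγ1 ρ φ hpot hd θstar
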